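/- (Margulis' theorem for group actions, part (b)) Let (b,c) be a connected graph over X with a nilpotent group G acting cocompactly on X such that H_{b,c} is G-invariant, and fix x₀ ∈ X. Then every harmonic extreme point of the convex set 𝓚 is G-multiplicative. -/

import Mathlib

/-!
Harnack's inequality along paths, transported by the `G`-invariance of `H`, compares `k` at
`h • v` and at `h • g⁻¹ • v` uniformly in `h`. If `g` commutes with `G` modulo the stabilizer of
`k`, then `k (g⁻¹ • h • v) = k (h • g⁻¹ • v)`, and cocompactness gives `shift g k ≤ C • k`;
extremality of `k` then forces `shift g k = χ g • k`. If this holds one step further down the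
lower central series, `χ` is conjugation invariant there and `χ ⁅pⁿ, qⁿ⁆ = χ ⁅p, q⁆ ^ (n * n)`,
while Harnack bounds `χ ⁅pⁿ, qⁿ⁆` by an exponential in `n`; hence `χ ⁅p, q⁆ = 1`. Descending
along the lower central series of the nilpotent group `G`, `⁅G, G⁆` fixes `k`, so every `g`
scales `k`, and `g ↦ χ g⁻¹` is the character.
-/

open MeasureTheory
open scoped BigOperators

noncomputable section

namespace GraphPaper

variable {X : Type*}

/-- The Schrödinger operator `H_{b,c}` of a graph `(b,c)` over `X`. -/
def schrodinger (b : X → X → ℝ) (c : X → ℝ) (f : X → ℝ) : X → ℝ :=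
  fun x => (∑' y, b x y * (f x - f y)) + c x * f x

/-- Membership of `f` in the domain of `H_{b,c}`. -/
def InDom (b : X → X → ℝ) (f : X → ℝ) : Prop :=
  ∀ x, Summable fun y => b x y * |f y|

/-- The graph `b` is connected: any two points are joined by a path of positive weights. -/
def Connected (b : X → X → ℝ) : Prop :=
  ∀ x y : X, Relation.ReflTransGen (fun u v => 0 < b u v) x y

/-- The degree `deg(x) = ∑_y b(x,y) + c(x)`. -/
def deg (b : X → X → ℝ) (c : X → ℝ) (x : X) : ℝ :=
  (∑' y, b x y) + c x

variable {G : Type*} [Group G] [MulAction G X]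

/-- The shift `T_g f (x) = f (g⁻¹ x)`. -/
def shift (g : G) (f : X → ℝ) : X → ℝ := fun x => f (g⁻¹ • x)

/-- `H_{b,c}` is invariant under the shifts by elements of a set `R ⊆ G`. -/
def HInvOn (b : X → X → ℝ) (c : X → ℝ) (R : Set G) : Prop :=
  ∀ g ∈ R, ∀ f : X → ℝ, InDom b f →
    InDom b (shift g f) ∧ schrodinger b c (shift g f) = shift g (schrodinger b c f)

/-- The action of `G` on `X` is cocompact: there is a finite `V` with `G V = X`. -/
def CocompactAction (G X : Type*) [Group G] [MulAction G X] : Prop :=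
  ∃ V : Finset X, ∀ x : X, ∃ g : G, ∃ v ∈ V, x = g • v

/-- The set `𝓗⁺` of nonnegative, not identically zero, harmonic functions. -/
def Hplus (b : X → X → ℝ) (c : X → ℝ) : Set (X → ℝ) :=
  {f | InDom b f ∧ schrodinger b c f = 0 ∧ (∀ x, 0 ≤ f x) ∧ f ≠ 0}

/-- The set `𝓚`: the closure of the normalized positive harmonic functions. -/
def Kset (b : X → X → ℝ) (c : X → ℝ) (x₀ : X) : Set (X → ℝ) :=
  closure {f : X → ℝ | f ∈ Hplus b c ∧ f x₀ = 1}

/-- The set `𝓚^R` of `R`-invariant elements of `𝓚`. -/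
def KsetR (b : X → X → ℝ) (c : X → ℝ) (x₀ : X) (R : Set G) : Set (X → ℝ) :=
  {f ∈ Kset b c x₀ | ∀ g ∈ R, shift g f = f}

/-- `f` is `G`-multiplicative with a character `γ ∈ Hom(G, ℝ_{>0})`. -/
def IsMultiplicative (G : Type*) [Group G] [MulAction G X] (f : X → ℝ) : Prop :=
  ∃ γ : G →* ℝ, (∀ g, 0 < γ g) ∧ ∀ g : G, shift g f = γ g⁻¹ • f

/-- `Q(R) = π⁻¹(Z(G/R))`, the preimage of the centre of `G/R`. -/
def Qsub (R : Subgroup G) [R.Normal] : Subgroup G :=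
  (Subgroup.center (G ⧸ R)).comap (QuotientGroup.mk' R)

/-- The set `𝓜` of multiplicative elements of `𝓚`. -/
def Mset (G : Type*) [Group G] [MulAction G X] (b : X → X → ℝ) (c : X → ℝ) (x₀ : X) :
    Set (X → ℝ) :=
  {f ∈ Kset b c x₀ | IsMultiplicative G f}

/-- The set `𝓚_λ` for the graph `(b, c - λ)`, i.e. for `λ`-harmonic functions. -/
def KsetLam (b : X → X → ℝ) (c : X → ℝ) (x₀ : X) (l : ℝ) : Set (X → ℝ) :=
  closure {f : X → ℝ | InDom b f ∧ (schrodinger b c f = fun x => l * f x) ∧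
    (∀ x, 0 ≤ f x) ∧ f ≠ 0 ∧ f x₀ = 1}

/-- The set `𝓜_λ` of multiplicative elements of `𝓚_λ`. -/
def MsetLam (G : Type*) [Group G] [MulAction G X] (b : X → X → ℝ) (c : X → ℝ) (x₀ : X)
    (l : ℝ) : Set (X → ℝ) :=
  {f ∈ KsetLam b c x₀ l | IsMultiplicative G f}

open scoped commutatorElement

@[simp]
lemma shift_apply (g : G) (f : X → ℝ) (x : X) : shift g f x = f (g⁻¹ • x) := rfl

lemma shift_mul (g h : G) (f : X → ℝ) : shift (g * h) f = shift g (shift h f) := by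
  funext x
  simp [mul_smul]

lemma shift_one (f : X → ℝ) : shift (1 : G) f = f := by
  funext x
  simp

lemma shift_smul (g : G) (a : ℝ) (f : X → ℝ) : shift g (a • f) = a • shift g f := rfl

lemma shift_inv_eq_inv_smul {g : G} {f : X → ℝ} {a : ℝ} (ha : a ≠ 0) (h : shift g f = a • f) :
    shift g⁻¹ f = a⁻¹ • f := by
  calc shift g⁻¹ f = a⁻¹ • a • shift g⁻¹ f := (inv_smul_smul₀ ha _).symm
    _ = a⁻¹ • f := by rw [← shift_smul, ← h, ← shift_mul, inv_mul_cancel, shift_one]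

lemma pos_of_shift_eq_smul {k : X → ℝ} (hk : ∀ x, 0 < k x) {g : G} {a : ℝ}
    (h : shift g k = a • k) (x : X) : 0 < a := by
  have hx := congrFun h x
  simp only [shift_apply, Pi.smul_apply, smul_eq_mul] at hx
  exact pos_of_mul_pos_left (hx ▸ hk _) (hk x).le

variable (G) in
def shiftStabilizer (k : X → ℝ) : Subgroup G where
  carrier := {g | shift g k = k}
  mul_mem' {g h} (hg : shift g k = k) (hh : shift h k = k) := by
    rw [Set.mem_ofPred_eq, shift_mul, hh, hg]
  one_mem' := shift_one k
  inv_mem' {g} (hg : shift g k = k) := by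
    rw [Set.mem_ofPred_eq]
    conv_rhs => rw [← shift_one (G := G) k, ← inv_mul_cancel g, shift_mul, hg]

lemma mem_shiftStabilizer {k : X → ℝ} {g : G} : g ∈ shiftStabilizer G k ↔ shift g k = k :=
  Iff.rfl

lemma apply_smul_of_mem_shiftStabilizer {k : X → ℝ} {g : G} (hg : g ∈ shiftStabilizer G k)
    (x : X) : k (g • x) = k x := by
  simpa using congrFun ((shiftStabilizer G k).inv_mem hg) x

lemma shift_conj_of_commutator_le {k : X → ℝ} {N : Subgroup G}
    (hfix : ⁅N, (⊤ : Subgroup G)⁆ ≤ shiftStabilizer G k) {w : G} (hw : w ∈ N) (a : G) :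
    shift (a * w * a⁻¹) k = shift w k := by
  have hcomm : ⁅w⁻¹, a⁆ ∈ shiftStabilizer G k :=
    hfix (Subgroup.commutator_mem_commutator (N.inv_mem hw) (Subgroup.mem_top a))
  rw [show a * w * a⁻¹ = w * ⁅w⁻¹, a⁆ by simp [commutatorElement_def, mul_assoc], shift_mul,
    mem_shiftStabilizer.1 hcomm]

lemma shift_commutatorElement_pow {k : X → ℝ} {H : Subgroup G}
    (hfix : ⁅⁅H, (⊤ : Subgroup G)⁆, (⊤ : Subgroup G)⁆ ≤ shiftStabilizer G k) {p q : G}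
    (hp : p ∈ H) {e : ℝ} (he : shift ⁅p, q⁆ k = e • k) (n : ℕ) :
    shift ⁅p ^ n, q ^ n⁆ k = e ^ (n * n) • k := by
  have hmem : ∀ (m : ℕ) (y : G), ⁅p ^ m, y⁆ ∈ ⁅H, (⊤ : Subgroup G)⁆ := fun m y =>
    Subgroup.commutator_mem_commutator (H.pow_mem hp m) (Subgroup.mem_top y)
  have right : ∀ m : ℕ, shift ⁅p, q ^ m⁆ k = e ^ m • k := by
    intro m
    induction m with
    | zero => simp [shift_one]
    | succ m ih =>
      rw [pow_succ', commutatorElement_mul_right_eq_mul_conj, mul_assoc _ q, mul_assoc,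
        shift_mul, shift_conj_of_commutator_le hfix (by simpa using hmem 1 (q ^ m)),
        ih, shift_smul, he, smul_smul, pow_succ]
  have left : ∀ (m : ℕ) {y : G} {d : ℝ}, shift ⁅p, y⁆ k = d • k →
      shift ⁅p ^ m, y⁆ k = d ^ m • k := by
    intro m y d hd
    induction m with
    | zero => simp [shift_one]
    | succ m ih =>
      rw [pow_succ', commutatorElement_mul_left_eq_conj_mul, shift_mul, hd, shift_smul,
        shift_conj_of_commutator_le hfix (hmem m y), ih, smul_smul, pow_succ']
  rw [left n (right n), ← pow_mul]

section Graph

variable {b : X → X → ℝ} {c : X → ℝ} {f g : X → ℝ}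

lemma InDom.summable_mul (hb0 : ∀ x y, 0 ≤ b x y) (hf : InDom b f) (x : X) :
    Summable fun y => b x y * f y :=
  Summable.of_norm_bounded (hf x) fun y => by
    rw [Real.norm_eq_abs, abs_mul, abs_of_nonneg (hb0 x y)]

lemma InDom.sub (hb0 : ∀ x y, 0 ≤ b x y) (hf : InDom b f) (hg : InDom b g) :
    InDom b (f - g) := fun x =>
  Summable.of_nonneg_of_le (fun y => mul_nonneg (hb0 x y) (abs_nonneg _))
    (fun y => by
      simpa only [Pi.sub_apply, mul_add] using
        mul_le_mul_of_nonneg_left (abs_sub (f y) (g y)) (hb0 x y))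
    ((hf x).add (hg x))

lemma InDom.smul (hf : InDom b f) (a : ℝ) : InDom b (a • f) := fun x =>
  ((hf x).mul_left |a|).congr fun y => by
    rw [Pi.smul_apply, smul_eq_mul, abs_mul]
    ring

lemma schrodinger_apply_of_inDom (hb0 : ∀ x y, 0 ≤ b x y) (hbs : ∀ x, Summable (b x))
    (hf : InDom b f) (x : X) :
    schrodinger b c f x = deg b c x * f x - ∑' y, b x y * f y := by
  simp only [schrodinger, deg, mul_sub]
  rw [Summable.tsum_sub ((hbs x).mul_right _) (hf.summable_mul hb0 x), tsum_mul_right]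
  ring

lemma schrodinger_smul (a : ℝ) (f : X → ℝ) :
    schrodinger b c (a • f) = a • schrodinger b c f := by
  funext x
  simp only [schrodinger, Pi.smul_apply, smul_eq_mul, ← mul_sub, mul_left_comm (b x _) a,
    tsum_mul_left]
  ring

lemma schrodinger_sub (hb0 : ∀ x y, 0 ≤ b x y) (hbs : ∀ x, Summable (b x)) (hf : InDom b f)
    (hg : InDom b g) : schrodinger b c (f - g) = schrodinger b c f - schrodinger b c g := by
  funext x
  simp only [Pi.sub_apply, schrodinger_apply_of_inDom hb0 hbs (hf.sub hb0 hg),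
    schrodinger_apply_of_inDom hb0 hbs hf, schrodinger_apply_of_inDom hb0 hbs hg, mul_sub]
  rw [Summable.tsum_sub (hf.summable_mul hb0 x) (hg.summable_mul hb0 x)]
  ring

variable (b c) in
structure NonnegHarmonic (f : X → ℝ) : Prop where
  inDom : InDom b f
  harmonic : schrodinger b c f = 0
  nonneg : ∀ x, 0 ≤ f x

namespace NonnegHarmonic

lemma smul (hf : NonnegHarmonic b c f) {a : ℝ} (ha : 0 ≤ a) : NonnegHarmonic b c (a • f) :=
  ⟨hf.inDom.smul a, by rw [schrodinger_smul, hf.harmonic, smul_zero],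
    fun x => mul_nonneg ha (hf.nonneg x)⟩

lemma sub (hb0 : ∀ x y, 0 ≤ b x y) (hbs : ∀ x, Summable (b x)) (hf : NonnegHarmonic b c f)
    (hg : NonnegHarmonic b c g) (hle : ∀ x, g x ≤ f x) : NonnegHarmonic b c (f - g) :=
  ⟨hf.inDom.sub hb0 hg.inDom,
    by rw [schrodinger_sub hb0 hbs hf.inDom hg.inDom, hf.harmonic, hg.harmonic, sub_zero],
    fun x => sub_nonneg.2 (hle x)⟩

lemma shift {R : Set G} (hH : HInvOn b c R) {g : G} (hg : g ∈ R) (hf : NonnegHarmonic b c f) :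
    NonnegHarmonic b c (shift g f) :=
  ⟨(hH g hg f hf.inDom).1, by rw [(hH g hg f hf.inDom).2, hf.harmonic]; rfl,
    fun x => hf.nonneg _⟩

lemma mul_apply_le_deg_mul (hb0 : ∀ x y, 0 ≤ b x y) (hbs : ∀ x, Summable (b x))
    (hf : NonnegHarmonic b c f) (u w : X) : b u w * f w ≤ deg b c u * f u := by
  have hsum : ∑' y, b u y * f y = deg b c u * f u := by
    have h := congrFun hf.harmonic u
    rw [schrodinger_apply_of_inDom hb0 hbs hf.inDom, Pi.zero_apply] at h
    linarith
  exact hsum ▸ (hf.inDom.summable_mul hb0 u).le_tsum w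
    fun y _ => mul_nonneg (hb0 u y) (hf.nonneg y)

end NonnegHarmonic

lemma exists_harnack_const (hb0 : ∀ x y, 0 ≤ b x y) (hbs : ∀ x, Summable (b x)) {u w : X}
    (huw : Relation.ReflTransGen (fun p q => 0 < b p q) u w) :
    ∃ C, 0 ≤ C ∧ ∀ f, NonnegHarmonic b c f → f w ≤ C * f u := by
  induction huw with
  | refl => exact ⟨1, zero_le_one, fun f _ => (one_mul _).ge⟩
  | @tail v w _ hvw ih =>
    obtain ⟨C, hC, hCf⟩ := ih
    refine ⟨|deg b c v| / b v w * C, mul_nonneg (div_nonneg (abs_nonneg _) hvw.le) hC,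
      fun f hf => ?_⟩
    have hedge : f w ≤ |deg b c v| / b v w * f v := by
      rw [div_mul_eq_mul_div, le_div_iff₀ hvw, mul_comm]
      exact (hf.mul_apply_le_deg_mul hb0 hbs v w).trans
        (mul_le_mul_of_nonneg_right (le_abs_self _) (hf.nonneg v))
    calc f w ≤ |deg b c v| / b v w * f v := hedge
      _ ≤ |deg b c v| / b v w * (C * f u) := by gcongr; exact hCf f hf
      _ = |deg b c v| / b v w * C * f u := by ring

namespace NonnegHarmonic

lemma pos (hb0 : ∀ x y, 0 ≤ b x y) (hbs : ∀ x, Summable (b x)) (hconn : Connected b)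
    (hf : NonnegHarmonic b c f) {x₀ : X} (hx₀ : 0 < f x₀) (x : X) : 0 < f x :=
  have ⟨_, hC, hCf⟩ := exists_harnack_const hb0 hbs (c := c) (hconn x x₀)
  pos_of_mul_pos_right (hx₀.trans_le (hCf f hf)) hC

end NonnegHarmonic

lemma nonneg_of_mem_Kset {x₀ : X} (hf : f ∈ Kset b c x₀) : 0 ≤ f :=
  closure_minimal (t := Set.Ici 0) (fun _ hg => hg.1.2.2.1) isClosed_Ici hf

lemma apply_eq_one_of_mem_Kset {x₀ : X} (hf : f ∈ Kset b c x₀) : f x₀ = 1 :=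
  show f ∈ {g : X → ℝ | g x₀ = 1} from
    closure_minimal (fun _ hg => hg.2) (isClosed_eq (continuous_apply x₀) continuous_const) hf

lemma NonnegHarmonic.inv_smul_mem_Kset (hf : NonnegHarmonic b c f) {x₀ : X} (hx₀ : 0 < f x₀) :
    (f x₀)⁻¹ • f ∈ Kset b c x₀ := by
  have hnorm : ((f x₀)⁻¹ • f) x₀ = 1 := inv_mul_cancel₀ hx₀.ne'
  have hf' := hf.smul (inv_nonneg.2 hx₀.le)
  exact subset_closure ⟨⟨hf'.inDom, hf'.harmonic, hf'.nonneg,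
    fun h0 => one_ne_zero (hnorm.symm.trans (congrFun h0 x₀))⟩, hnorm⟩

lemma eq_smul_of_le_mul_of_mem_extremePoints (hb0 : ∀ x y, 0 ≤ b x y)
    (hbs : ∀ x, Summable (b x)) {x₀ : X} {k : X → ℝ}
    (hk : k ∈ Set.extremePoints ℝ (Kset b c x₀)) (hkh : NonnegHarmonic b c k)
    (hf : NonnegHarmonic b c f) {C : ℝ} (hle : ∀ x, f x ≤ C * k x) (hf₀ : 0 < f x₀) :
    f = f x₀ • k := by
  have hk₀ : k x₀ = 1 := apply_eq_one_of_mem_Kset hk.1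
  have hfC : f x₀ ≤ C := by simpa [hk₀] using hle x₀
  set s := C + 1 with hs
  have hfs : 0 < s - f x₀ := by linarith
  have hg : NonnegHarmonic b c (s • k - f) :=
    (hkh.smul (by linarith)).sub hb0 hbs hf fun x =>
      (hle x).trans (mul_le_mul_of_nonneg_right (by linarith) (hkh.nonneg x))
  have hg₀ : (s • k - f) x₀ = s - f x₀ := by simp [hk₀]
  -- `k` is a convex combination of the normalisations of `f` and `s • k - f`.
  have hseg : k ∈ openSegment ℝ ((f x₀)⁻¹ • f) (((s • k - f) x₀)⁻¹ • (s • k - f)) := by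
    have hs0 : 0 < s := by linarith
    refine ⟨f x₀ / s, (s - f x₀) / s, div_pos hf₀ hs0, div_pos hfs hs0, by field_simp; ring, ?_⟩
    funext x
    simp only [hg₀, Pi.add_apply, Pi.smul_apply, Pi.sub_apply, smul_eq_mul]
    field_simp
    ring
  have h := hk.2 (hf.inv_smul_mem_Kset hf₀) (hg.inv_smul_mem_Kset (hg₀ ▸ hfs)) hseg
  rw [← h, smul_inv_smul₀ hf₀.ne']

variable (G) in
def UniformHarnack (k : X → ℝ) : Prop :=
  ∀ p q : X, ∃ C, 0 ≤ C ∧ ∀ h : G, k (h • q) ≤ C * k (h • p)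

lemma NonnegHarmonic.uniformHarnack (hb0 : ∀ x y, 0 ≤ b x y) (hbs : ∀ x, Summable (b x))
    (hconn : Connected b) (hH : HInvOn b c (Set.univ : Set G)) (hf : NonnegHarmonic b c f) :
    UniformHarnack G f :=
  fun p q =>
    have ⟨C, hC, hCf⟩ := exists_harnack_const hb0 hbs (c := c) (hconn p q)
    ⟨C, hC, fun h => by simpa using hCf _ (hf.shift hH (Set.mem_univ h⁻¹))⟩

end Graph

lemma le_one_of_pow_mul_self_le {a M : ℝ} (hM : 0 ≤ M) (h : ∀ n : ℕ, a ^ (n * n) ≤ M ^ n) :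
    a ≤ 1 := by
  by_contra! ha
  obtain ⟨n, hn⟩ := pow_unbounded_of_one_lt (max M 1) ha
  have hn0 : n ≠ 0 := by
    rintro rfl
    simp at hn
  have hlt : M ^ n < (a ^ n) ^ n := pow_lt_pow_left₀ ((le_max_left M 1).trans_lt hn) hM hn0
  exact (h n).not_gt (by rwa [← pow_mul] at hlt)

namespace UniformHarnack

variable {k : X → ℝ}

lemma exists_pow_bound (hUH : UniformHarnack G k) (t : G) (x : X) :
    ∃ C, 0 ≤ C ∧ ∀ (g : G) (n : ℕ), k ((g * t ^ n) • x) ≤ C ^ n * k (g • x) := by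
  obtain ⟨C, hC, hCk⟩ := hUH x (t • x)
  refine ⟨C, hC, fun g n => ?_⟩
  induction n with
  | zero => simp
  | succ n ih =>
    calc k ((g * t ^ (n + 1)) • x) = k ((g * t ^ n) • t • x) := by
          rw [pow_succ, ← mul_assoc, mul_smul]
      _ ≤ C * k ((g * t ^ n) • x) := hCk _
      _ ≤ C * (C ^ n * k (g • x)) := mul_le_mul_of_nonneg_left ih hC
      _ = C ^ (n + 1) * k (g • x) := by ring

lemma le_one_of_shift_commutatorElement_pow (hUH : UniformHarnack G k) (hk : ∀ x, 0 < k x)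
    (x : X) {p q : G} {e : ℝ} (h : ∀ n : ℕ, shift ⁅p ^ n, q ^ n⁆ k = e ^ (n * n) • k) :
    e ≤ 1 := by
  obtain ⟨A, hA, hAk⟩ := hUH.exists_pow_bound q⁻¹ x
  obtain ⟨B, hB, hBk⟩ := hUH.exists_pow_bound p x
  obtain ⟨C, hC, hCk⟩ := hUH.exists_pow_bound q x
  obtain ⟨D, hD, hDk⟩ := hUH.exists_pow_bound p⁻¹ x
  refine le_one_of_pow_mul_self_le (by positivity : 0 ≤ A * B * C * D) fun n => ?_
  have hpx : 0 < k (p ^ n • x) := hk _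
  have hup : e ^ (n * n) * k (p ^ n • x) = k ((q ^ n * p ^ n * q⁻¹ ^ n) • x) := by
    have := congrFun (h n) (p ^ n • x)
    simp only [shift_apply, Pi.smul_apply, smul_eq_mul, smul_smul] at this
    rw [← this, commutatorElement_def]
    congr 2
    group
  have hdown : k x ≤ D ^ n * k (p ^ n • x) := by
    simpa using hDk (p ^ n) n
  refine le_of_mul_le_mul_right ?_ hpx
  calc e ^ (n * n) * k (p ^ n • x) = k ((q ^ n * p ^ n * q⁻¹ ^ n) • x) := hup
    _ ≤ A ^ n * k ((q ^ n * p ^ n) • x) := hAk _ n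
    _ ≤ A ^ n * (B ^ n * k ((1 * q ^ n) • x)) := by
      rw [one_mul]
      exact mul_le_mul_of_nonneg_left (hBk _ n) (by positivity)
    _ ≤ A ^ n * (B ^ n * (C ^ n * k x)) := by
      gcongr
      simpa using hCk 1 n
    _ ≤ A ^ n * (B ^ n * (C ^ n * (D ^ n * k (p ^ n • x)))) := by gcongr
    _ = (A * B * C * D) ^ n * k (p ^ n • x) := by ring

lemma exists_shift_le_mul (hUH : UniformHarnack G k) (hk : ∀ x, 0 ≤ k x)
    (hcocpt : CocompactAction G X) {H : Subgroup G}
    (hfix : ⁅H, (⊤ : Subgroup G)⁆ ≤ shiftStabilizer G k)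
    {g : G} (hg : g ∈ H) : ∃ C, ∀ x, shift g k x ≤ C * k x := by
  obtain ⟨V, hV⟩ := hcocpt
  choose C hC hCk using fun v : X => hUH v (g⁻¹ • v)
  refine ⟨∑ v ∈ V, C v, fun x => ?_⟩
  obtain ⟨h, v, hv, rfl⟩ := hV x
  have hcomm : ⁅g⁻¹, h⁆ ∈ shiftStabilizer G k :=
    hfix (Subgroup.commutator_mem_commutator (H.inv_mem hg) (Subgroup.mem_top h))
  calc shift g k (h • v) = k (⁅g⁻¹, h⁆ • h • g⁻¹ • v) := by
        simp only [shift_apply, smul_smul, commutatorElement_def]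
        group
    _ = k (h • g⁻¹ • v) := apply_smul_of_mem_shiftStabilizer hcomm _
    _ ≤ C v * k (h • v) := hCk v h
    _ ≤ (∑ v ∈ V, C v) * k (h • v) :=
      mul_le_mul_of_nonneg_right (Finset.single_le_sum (fun v _ => hC v) hv) (hk _)

lemma commutator_le_shiftStabilizer [Nonempty X] (hUH : UniformHarnack G k)
    (hk : ∀ x, 0 < k x) {H : Subgroup G}
    (hscale : ∀ w ∈ ⁅H, (⊤ : Subgroup G)⁆, ∃ e : ℝ, shift w k = e • k)
    (hfix : ⁅⁅H, (⊤ : Subgroup G)⁆, (⊤ : Subgroup G)⁆ ≤ shiftStabilizer G k) :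
    ⁅H, (⊤ : Subgroup G)⁆ ≤ shiftStabilizer G k := by
  rw [Subgroup.commutator_le]
  intro p hp q _
  obtain ⟨e, he⟩ := hscale _ (Subgroup.commutator_mem_commutator hp (Subgroup.mem_top q))
  obtain ⟨x⟩ := ‹Nonempty X›
  have he0 : 0 < e := pos_of_shift_eq_smul hk he x
  have hpow := shift_commutatorElement_pow hfix hp he
  have hle : e ≤ 1 := hUH.le_one_of_shift_commutatorElement_pow hk x hpow
  have hinv : e⁻¹ ≤ 1 := hUH.le_one_of_shift_commutatorElement_pow hk x (p := q) (q := p)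
    fun n => by
      rw [← commutatorElement_inv, shift_inv_eq_inv_smul (by positivity) (hpow n), inv_pow]
  rw [mem_shiftStabilizer, he, le_antisymm hle ((inv_le_one₀ he0).1 hinv), one_smul]

lemma commutator_le_of_commutator_commutator_le [Nonempty X] (hUH : UniformHarnack G k)
    (hk : ∀ x, 0 < k x) (hcocpt : CocompactAction G X)
    (hdom : ∀ (g : G) (C : ℝ), (∀ x, shift g k x ≤ C * k x) → ∃ e : ℝ, shift g k = e • k)
    {H : Subgroup G} (hfix : ⁅⁅H, (⊤ : Subgroup G)⁆, (⊤ : Subgroup G)⁆ ≤ shiftStabilizer G k) :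
    ⁅H, (⊤ : Subgroup G)⁆ ≤ shiftStabilizer G k :=
  hUH.commutator_le_shiftStabilizer hk (fun w hw =>
    have ⟨C, hC⟩ := hUH.exists_shift_le_mul (fun x => (hk x).le) hcocpt hfix hw
    hdom w C hC) hfix

lemma exists_shift_eq_smul [Group.IsNilpotent G] [Nonempty X] (hUH : UniformHarnack G k)
    (hk : ∀ x, 0 < k x) (hcocpt : CocompactAction G X)
    (hdom : ∀ (g : G) (C : ℝ), (∀ x, shift g k x ≤ C * k x) → ∃ e : ℝ, shift g k = e • k)
    (g : G) : ∃ e : ℝ, shift g k = e • k := by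
  obtain ⟨n, hn⟩ := Subgroup.nilpotent_iff_lowerCentralSeries.1 ‹Group.IsNilpotent G›
  have hL : ∀ d j, n ≤ j + d →
      (⊤ : Subgroup G).lowerCentralSeries (j + 1) ≤ shiftStabilizer G k := by
    intro d
    induction d with
    | zero =>
      intro j hj
      exact (Subgroup.lowerCentralSeries_antitone _ (by omega)).trans (hn ▸ bot_le)
    | succ d ih =>
      intro j hj
      exact hUH.commutator_le_of_commutator_commutator_le hk hcocpt hdom (ih (j + 1) (by omega))
  obtain ⟨C, hC⟩ := hUH.exists_shift_le_mul (fun x => (hk x).le) hcocpt (H := ⊤) (hL n 0 (by omega))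
    (Subgroup.mem_top g)
  exact hdom g C hC

end UniformHarnack

lemma isMultiplicative_of_forall_shift_eq_smul {k : X → ℝ} (hk : ∀ x, 0 < k x) (x₀ : X)
    (h : ∀ g : G, ∃ e : ℝ, shift g k = e • k) : IsMultiplicative G k := by
  have hγ : ∀ (g : G) (y : X), k (g • y) = k (g • x₀) / k x₀ * k y := by
    intro g y
    obtain ⟨e, he⟩ := h g⁻¹
    have hy := congrFun he y
    have hx₀ := congrFun he x₀
    simp only [shift_apply, inv_inv, Pi.smul_apply, smul_eq_mul] at hy hx₀
    rw [hy, hx₀, mul_div_cancel_right₀ _ (hk x₀).ne']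
  refine ⟨{ toFun := fun g => k (g • x₀) / k x₀
            map_one' := by simp [(hk x₀).ne']
            map_mul' := fun g h => by rw [mul_smul, hγ g (h • x₀), mul_div_assoc] },
    fun g => div_pos (hk _) (hk _), fun g => ?_⟩
  funext y
  simp [hγ g⁻¹ y]

theorem extremePoint_multiplicative_general {X : Type*} {G : Type*} [Group G]
    [MulAction G X] [Group.IsNilpotent G]
    (b : X → X → ℝ) (c : X → ℝ)
    (hb0 : ∀ x y, 0 ≤ b x y) (hbs : ∀ x, Summable (b x))
    (hconn : Connected b) (hcocpt : CocompactAction G X)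
    (hH : HInvOn b c (Set.univ : Set G)) (x₀ : X)
    (k : X → ℝ) (hk : k ∈ Set.extremePoints ℝ (Kset b c x₀))
    (hdom : InDom b k) (hharm : schrodinger b c k = 0) :
    IsMultiplicative G k := by
  have hkh : NonnegHarmonic b c k := ⟨hdom, hharm, nonneg_of_mem_Kset hk.1⟩
  have hkpos : ∀ x, 0 < k x :=
    hkh.pos hb0 hbs hconn (x₀ := x₀) (by rw [apply_eq_one_of_mem_Kset hk.1]; exact one_pos)
  have : Nonempty X := ⟨x₀⟩
  refine isMultiplicative_of_forall_shift_eq_smul hkpos x₀ fun g =>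
    (hkh.uniformHarnack hb0 hbs hconn hH).exists_shift_eq_smul hkpos hcocpt ?_ g
  intro g C hC
  exact ⟨_, eq_smul_of_le_mul_of_mem_extremePoints hb0 hbs hk hkh
    (hkh.shift hH (Set.mem_univ g)) hC (hkpos _)⟩

/-- **Margulis' theorem for group actions, part (b).**
Every harmonic extreme point of `𝓚` is `G`-multiplicative. -/
theorem extremePoint_multiplicative {X : Type*} [Countable X] {G : Type*} [Group G]
    [MulAction G X] [Group.IsNilpotent G]
    (b : X → X → ℝ) (c : X → ℝ)
    (hb0 : ∀ x y, 0 ≤ b x y) (hbd : ∀ x, b x x = 0) (hbs : ∀ x, Summable (b x))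
    (hconn : Connected b) (hcocpt : CocompactAction G X)
    (hH : HInvOn b c (Set.univ : Set G)) (x₀ : X)
    (k : X → ℝ) (hk : k ∈ Set.extremePoints ℝ (Kset b c x₀))
    (hdom : InDom b k) (hharm : schrodinger b c k = 0) :
    IsMultiplicative G k :=
  extremePoint_multiplicative_general b c hb0 hbs hconn hcocpt hH x₀ k hk hdom hharm

end GraphPaper
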